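/- Let {X_n} be the single-death chain with immigration on ℤ⁺ (P_{0j} = β_j, P_{i,i−1} = p_i, P_{i0} = γ_i for i ≥ 2, P_{ii} = remainder). If Σ_{j=i₀}^∞ β_j/(p_j + γ_j) = ∞ for some i₀ > 0, then {X_n} is not ergodic (not positive recurrent). -/

import Mathlib

open ENNReal Set

/-- One-step transition matrix of the single-death chain with immigration on `ℤ⁺`. -/
noncomputable def Pmat (β p γ : ℕ → ℝ) (i j : ℕ) : ℝ :=
  if i = 0 then β j
  else if j = i - 1 then p i
  else if j = 0 then (if 2 ≤ i then γ i else 0)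
  else if j = i then 1 - p i - (if 2 ≤ i then γ i else 0)
  else 0

/-- `retN Q A n i`: probability, starting from `i`, that the first return time to `A`
equals `n + 1`. -/
noncomputable def retN (Q : ℕ → ℕ → ℝ≥0∞) (A : Set ℕ) : ℕ → ℕ → ℝ≥0∞
  | 0 => fun i => ∑' j, A.indicator (Q i) j
  | (n + 1) => fun i => ∑' j, Aᶜ.indicator (fun k => Q i k * retN Q A n k) j

/-- Ergodicity (positive recurrence) of the countable chain: it returns to the state `0`
almost surely from every state, and `E_0[τ_0^+] < ∞`. -/
def ErgodicN (Q : ℕ → ℕ → ℝ≥0∞) : Prop :=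
  (∀ i : ℕ, (∑' n : ℕ, retN Q {0} n i) = 1) ∧
    (∑' n : ℕ, ((n : ℝ≥0∞) + 1) * retN Q {0} n 0) ≠ ⊤

lemma aux_tsum_tail (f : ℕ → ℝ≥0∞) :
    ∑' n : ℕ, (∑' k : ℕ, if n ≤ k then f k else 0) = ∑' k : ℕ, ((k : ℝ≥0∞) + 1) * f k := by
  rw [ENNReal.tsum_comm]
  refine tsum_congr fun k => ?_
  rw [tsum_eq_sum (s := Finset.range (k + 1)) (by
    intro n hn
    simp only [Finset.mem_range, Nat.lt_succ_iff, not_le] at hn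
    simp [Nat.not_le.mpr hn] )]
  rw [Finset.sum_ite_of_true (by
    intro n hn
    simp only [Finset.mem_range, Nat.lt_succ_iff] at hn
    exact hn)]
  rw [Finset.sum_const, Finset.card_range, nsmul_eq_mul]
  push_cast
  ring

lemma aux_tail_ge (f : ℕ → ℝ≥0∞) (r : ℝ≥0∞) (h1 : ∑' n, f n = 1)
    (hstep : ∀ m, r * f m ≤ f (m + 1)) :
    ∀ n : ℕ, r ^ n ≤ ∑' k : ℕ, if n ≤ k then f k else 0 := by
  intro n
  induction n with
  | zero => simp [h1]
  | succ n ih =>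
    have hre : (∑' k : ℕ, if n + 1 ≤ k then f k else 0)
        = ∑' m : ℕ, if n ≤ m then f (m + 1) else 0 := by
      rw [← Function.Injective.tsum_eq (g := fun m : ℕ => m + 1)
        (fun a b h => by simpa using h) (f := fun k => if n + 1 ≤ k then f k else 0) (by
          intro x hx
          simp only [Function.mem_support, ne_eq, ite_eq_right_iff, not_forall] at hx
          obtain ⟨hle, -⟩ := hx
          exact ⟨x - 1, by simp only []; omega⟩)]
      refine tsum_congr fun m => by simp [Nat.succ_le_succ_iff]
    calc r ^ (n + 1) = r * r ^ n := by ring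
    _ ≤ r * ∑' k : ℕ, if n ≤ k then f k else 0 := by gcongr
    _ = ∑' k : ℕ, if n ≤ k then r * f k else 0 := by
        rw [← ENNReal.tsum_mul_left]; exact tsum_congr fun k => by split <;> simp
    _ ≤ ∑' m : ℕ, if n ≤ m then f (m + 1) else 0 := by
        refine ENNReal.tsum_le_tsum fun k => ?_
        split
        · exact hstep k
        · exact le_rfl
    _ = _ := hre.symm

/-- For the single-death chain with immigration, if
`∑_{j ≥ i₀} β_j / (p_j + γ_j) = ∞` for some `i₀ > 0`, then the chain is not ergodic. -/
theorem single_death_chain_not_ergodic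
    (β p γ : ℕ → ℝ)
    (hβ : ∀ j, 0 ≤ β j) (hβsum : ∑' j, β j = 1)
    (hp : ∀ i, 0 ≤ p i) (hγ : ∀ i, 0 ≤ γ i)
    (hpγ : ∀ i, 2 ≤ i → 0 < γ i + p i ∧ γ i + p i ≤ 1)
    (hp1 : 0 < p 1 ∧ p 1 ≤ 1)
    (hdiv : ∃ i₀ : ℕ, 0 < i₀ ∧
      (∑' j : ℕ, if i₀ ≤ j then ENNReal.ofReal (β j / (p j + γ j)) else 0) = ⊤) :
    ¬ ErgodicN (fun i j => ENNReal.ofReal (Pmat β p γ i j)) := by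
  rintro ⟨hret, hE⟩
  obtain ⟨i₀, hi₀, hsum⟩ := hdiv
  set Q : ℕ → ℕ → ℝ≥0∞ := fun i j => ENNReal.ofReal (Pmat β p γ i j) with hQdef
  set f : ℕ → ℕ → ℝ≥0∞ := fun k n => retN Q {0} n k with hfdef
  set E : ℕ → ℝ≥0∞ := fun k => ∑' n : ℕ, ((n : ℝ≥0∞) + 1) * f k n with hEdef
  have hind : ∀ (g : ℕ → ℝ≥0∞) (k : ℕ),
      (({0} : Set ℕ)ᶜ).indicator g k = if k = 0 then 0 else g k := by
    intro g k
    by_cases h : k = 0 <;> simp [h]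
  -- Step A : one-step lower bound at states j ≥ 2
  have hstep : ∀ j, 2 ≤ j → ∀ m,
      ENNReal.ofReal (1 - (p j + γ j)) * f j m ≤ f j (m + 1) := by
    intro j hj m
    have hQjj : Q j j = ENNReal.ofReal (1 - (p j + γ j)) := by
      have h1 : Pmat β p γ j j = 1 - (p j + γ j) := by
        simp only [Pmat]
        rw [if_neg (by omega), if_neg (by omega), if_neg (by omega)]
        rw [if_pos trivial, if_pos hj]
        ring
      simp [hQdef, h1]
    have heq : f j (m + 1)
        = ∑' k : ℕ, (({0} : Set ℕ)ᶜ).indicator (fun k => Q j k * f k m) k := rfl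
    rw [heq]
    refine le_trans ?_ (ENNReal.le_tsum j)
    rw [hind]
    rw [if_neg (by omega), hQjj]
  -- Step B : expected return time from j ≥ 2 is at least 1 / (p j + γ j)
  have hEk : ∀ k, 2 ≤ k → (ENNReal.ofReal (p k + γ k))⁻¹ ≤ E k := by
    intro k hk
    obtain ⟨hq0, hq1⟩ := hpγ k hk
    set r : ℝ≥0∞ := ENNReal.ofReal (1 - (p k + γ k)) with hrdef
    have h1r : 1 - r = ENNReal.ofReal (p k + γ k) := by
      rw [hrdef, ← ENNReal.ofReal_one,
        ← ENNReal.ofReal_sub _ (by rw [sub_nonneg]; linarith)]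
      norm_num
    have htail := aux_tail_ge (f k) r (hret k) (hstep k hk)
    have : (ENNReal.ofReal (p k + γ k))⁻¹ = ∑' n : ℕ, r ^ n := by
      rw [ENNReal.tsum_geometric, h1r]
    rw [this, hEdef]
    simp only []
    rw [← aux_tsum_tail]
    exact ENNReal.tsum_le_tsum htail
  -- Step C : E 0 dominates ∑_{k ≠ 0} β k * E k
  have hkey : (∑' k : ℕ, if k = 0 then 0 else Q 0 k * E k) ≤ E 0 := by
    have hsplit : E 0 = (((0 : ℕ) : ℝ≥0∞) + 1) * f 0 0
        + ∑' m : ℕ, (((m + 1 : ℕ) : ℝ≥0∞) + 1) * f 0 (m + 1) :=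
      tsum_eq_zero_add' ENNReal.summable
    calc (∑' k : ℕ, if k = 0 then 0 else Q 0 k * E k)
        = ∑' k : ℕ, ∑' m : ℕ, (if k = 0 then 0 else ((m : ℝ≥0∞) + 1) * (Q 0 k * f k m)) := by
          refine tsum_congr fun k => ?_
          split
          · simp
          · rw [hEdef]
            simp only []
            rw [← ENNReal.tsum_mul_left]
            exact tsum_congr fun m => by ring
      _ = ∑' m : ℕ, ∑' k : ℕ, (if k = 0 then 0 else ((m : ℝ≥0∞) + 1) * (Q 0 k * f k m)) :=
          ENNReal.tsum_comm
      _ = ∑' m : ℕ, ((m : ℝ≥0∞) + 1) * f 0 (m + 1) := by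
          refine tsum_congr fun m => ?_
          have heq : f 0 (m + 1)
              = ∑' k : ℕ, (({0} : Set ℕ)ᶜ).indicator (fun k => Q 0 k * f k m) k := rfl
          rw [heq, ← ENNReal.tsum_mul_left]
          refine tsum_congr fun k => ?_
          rw [hind]
          split <;> simp
      _ ≤ ∑' m : ℕ, (((m + 1 : ℕ) : ℝ≥0∞) + 1) * f 0 (m + 1) := by
          refine ENNReal.tsum_le_tsum fun m => ?_
          gcongr
          push_cast
          linarith [le_refl (m : ℝ≥0∞)]
      _ ≤ E 0 := by rw [hsplit]; exact le_add_self
  -- Step D : the divergent series lower-bounds the left side of hkey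
  set i₂ : ℕ := max 2 i₀ with hi₂
  have hlow : (∑' k : ℕ, if i₂ ≤ k then ENNReal.ofReal (β k / (p k + γ k)) else 0)
      ≤ ∑' k : ℕ, if k = 0 then 0 else Q 0 k * E k := by
    refine ENNReal.tsum_le_tsum fun k => ?_
    split
    · rename_i hk
      have hk2 : 2 ≤ k := le_trans (le_max_left _ _) hk
      rw [if_neg (by omega)]
      have hQ0k : Q 0 k = ENNReal.ofReal (β k) := by simp [hQdef, Pmat]
      have hq0 : 0 < p k + γ k := by have := (hpγ k hk2).1; linarith
      rw [ENNReal.ofReal_div_of_pos hq0, div_eq_mul_inv, hQ0k]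
      exact mul_le_mul_right (hEk k hk2) _
    · exact zero_le
  -- Step E : divergence transfers from i₀ to i₂
  have hdiv2 : (∑' k : ℕ, if i₂ ≤ k then ENNReal.ofReal (β k / (p k + γ k)) else 0) = ⊤ := by
    set a : ℕ → ℝ≥0∞ := fun k => ENNReal.ofReal (β k / (p k + γ k)) with hadef
    have hfin : (∑' k : ℕ, if k < 2 then a k else 0) ≠ ⊤ := by
      rw [tsum_eq_sum (s := Finset.range 2) (by
        intro b hb
        simp only [Finset.mem_range] at hb
        rw [if_neg hb])]
      rw [Finset.sum_range_succ, Finset.sum_range_one]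
      simp only [Nat.zero_lt_two, Nat.one_lt_two, if_pos]
      exact ENNReal.add_ne_top.mpr ⟨ENNReal.ofReal_ne_top, ENNReal.ofReal_ne_top⟩
    have hpt : ∀ k : ℕ, (if i₀ ≤ k then a k else 0)
        ≤ (if i₂ ≤ k then a k else 0) + (if k < 2 then a k else 0) := by
      intro k
      by_cases h1 : i₀ ≤ k
      · by_cases h2 : i₂ ≤ k
        · rw [if_pos h1, if_pos h2]; exact le_add_right le_rfl
        · have : k < 2 := by omega
          rw [if_pos h1, if_neg h2, if_pos this, zero_add]
      · rw [if_neg h1]; exact zero_le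
    by_contra hne
    have : (∑' k : ℕ, if i₀ ≤ k then a k else 0)
        ≤ (∑' k : ℕ, if i₂ ≤ k then a k else 0) + ∑' k : ℕ, if k < 2 then a k else 0 := by
      rw [← ENNReal.tsum_add]
      exact ENNReal.tsum_le_tsum hpt
    rw [hsum] at this
    have hlt := ENNReal.add_lt_top.mpr ⟨lt_top_iff_ne_top.mpr hne, lt_top_iff_ne_top.mpr hfin⟩
    exact absurd (top_le_iff.mp this) hlt.ne
  -- conclude
  apply hE
  have : (⊤ : ℝ≥0∞) ≤ E 0 := by
    rw [← hdiv2]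
    exact le_trans hlow hkey
  exact top_le_iff.mp this
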